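/- arXiv:0903.5288 — 6 statements merged into one kernel-verified Lean document; each statement's English description precedes it below -/
import Mathlib

section
/- Let G be a group generated by a finite subset S (Subgroup.closure S = ⊤), and let H and K be subgroups of G with H ⊓ K = ⊥. Then for every natural number r, the set of elements h ∈ H for which there exists k ∈ K such that h⁻¹ * k has S-length at most r is finite. (This is the Pigeonhole Lemma: in the word metric on G determined by S, the intersection H ∩ N_r(K) of H with the r-neighbourhood of K is finite.) -/
/-- `x` has `S`-length at most `r`: it is a product of at most `r` elements, each lying in
`S` or in the set of inverses of elements of `S`.  This encodes the word metric on a group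
generated by `S`: `d(g,h) ≤ r` iff `g⁻¹ * h` has `S`-length at most `r`. -/
def SLenLE {G : Type*} [Group G] (S : Finset G) (r : ℕ) (x : G) : Prop :=
  ∃ l : List G, l.length ≤ r ∧ (∀ y ∈ l, y ∈ S ∨ y⁻¹ ∈ S) ∧ l.prod = x

lemma sLenLE_finite {G : Type*} [Group G] (S : Finset G) :
    ∀ r : ℕ, {x : G | SLenLE S r x}.Finite := by
  intro r
  induction r with
  | zero =>
    apply Set.Finite.subset (Set.finite_singleton 1)
    rintro x ⟨l, hl, -, hp⟩
    have h0 : l = [] := List.length_eq_zero_iff.mp (Nat.le_zero.mp hl)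
    subst h0
    simp at hp
    simp [← hp]
  | succ r ih =>
    have hT : ((S : Set G) ∪ (S : Set G)⁻¹).Finite :=
      (S.finite_toSet).union (S.finite_toSet.inv)
    apply Set.Finite.subset (ih.union (hT.biUnion (fun y _ => ih.image (y * ·))))
    rintro x ⟨l, hl, hmem, hp⟩
    cases l with
    | nil =>
      left
      exact ⟨[], by simp, by simp, hp⟩
    | cons y t =>
      right
      have hy : y ∈ (S : Set G) ∪ (S : Set G)⁻¹ := by
        rcases hmem y (by simp) with h | h
        · exact Or.inl h
        · exact Or.inr (by simpa using h)
      refine Set.mem_biUnion hy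
        ⟨t.prod, ⟨t, ?_, fun z hz => hmem z (by simp [hz]), rfl⟩, ?_⟩
      · simpa using Nat.succ_le_succ_iff.mp hl
      · simpa using hp

/-- Pigeonhole Lemma: if `G` is generated by the finite set `S` and `H ⊓ K = ⊥`, then the
intersection of `H` with the `r`-neighbourhood of `K` in the word metric is finite. -/
theorem stmt_1 {G : Type*} [Group G] (S : Finset G)
    (hS : Subgroup.closure (S : Set G) = ⊤)
    (H K : Subgroup G) (hHK : H ⊓ K = ⊥) (r : ℕ) :
    {h : G | h ∈ H ∧ ∃ k ∈ K, SLenLE S r (h⁻¹ * k)}.Finite := by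
  have hW := sLenLE_finite S r
  have key : {h : G | h ∈ H ∧ ∃ k ∈ K, SLenLE S r (h⁻¹ * k)} ⊆
      ⋃ w ∈ {x : G | SLenLE S r x}, {h : G | h ∈ H ∧ ∃ k ∈ K, h⁻¹ * k = w} := by
    rintro h ⟨hH, k, hk, hw⟩
    exact Set.mem_biUnion hw ⟨hH, k, hk, rfl⟩
  refine Set.Finite.subset (hW.biUnion fun w _ => ?_) key
  apply Set.Subsingleton.finite
  rintro h₁ ⟨hH₁, k₁, hk₁, hw₁⟩ h₂ ⟨hH₂, k₂, hk₂, hw₂⟩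
  have hk : k₁ = h₁ * w := by rw [← hw₁]; group
  have hk' : k₂ = h₂ * w := by rw [← hw₂]; group
  have hmem : h₂ * h₁⁻¹ ∈ H ⊓ K := by
    constructor
    · exact H.mul_mem hH₂ (H.inv_mem hH₁)
    · have : h₂ * h₁⁻¹ = k₂ * k₁⁻¹ := by rw [hk, hk']; group
      rw [this]
      exact K.mul_mem hk₂ (K.inv_mem hk₁)
  rw [hHK, Subgroup.mem_bot] at hmem
  have := mul_eq_one_iff_eq_inv.mp hmem
  simpa using this.symm
end

section
/- Let G be a group generated by a finite subset S (Subgroup.closure S = ⊤), let P and H be subgroups of G, let g ∈ G, and suppose that H intersects the conjugate subgroup gPg⁻¹ trivially, i.e. H ⊓ (gPg⁻¹) = ⊥. Then for every natural number r, the set of elements h ∈ H for which there exists p ∈ P such that h⁻¹ * (g * p) has S-length at most r is finite; consequently there exists λ ∈ ℕ such that every such h has S-length at most λ. (In the word metric determined by S: only finitely many, hence only boundedly short, elements of H lie in the r-neighbourhood N_r(gP) of the coset gP.) -/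
theorem SLenLE.mono {G : Type*} [Group G] {S : Finset G} {r r' : ℕ} {x : G}
    (h : SLenLE S r x) (hr : r ≤ r') : SLenLE S r' x := by
  obtain ⟨l, hl, hmem, hprod⟩ := h
  exact ⟨l, hl.trans hr, hmem, hprod⟩

theorem slen_exists {G : Type*} [Group G] (S : Finset G)
    (hS : Subgroup.closure (S : Set G) = ⊤) (x : G) : ∃ n, SLenLE S n x := by
  have hx : x ∈ Subgroup.closure (S : Set G) := by rw [hS]; trivial
  induction hx using Subgroup.closure_induction with
  | mem y hy => exact ⟨1, [y], by simp, fun z hz => by simp at hz; subst hz; exact Or.inl (by exact_mod_cast hy), by simp⟩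
  | one => exact ⟨0, [], by simp, by simp, by simp⟩
  | mul a b _ _ ha hb =>
    obtain ⟨n, l1, hl1, hm1, hp1⟩ := ha
    obtain ⟨m, l2, hl2, hm2, hp2⟩ := hb
    refine ⟨n + m, l1 ++ l2, by simp; omega, ?_, by simp [hp1, hp2]⟩
    intro y hy
    rcases List.mem_append.1 hy with h | h
    · exact hm1 y h
    · exact hm2 y h
  | inv a _ ha =>
    obtain ⟨n, l, hl, hm, hp⟩ := ha
    refine ⟨n, (l.map Inv.inv).reverse, by simpa using hl, ?_, ?_⟩
    · intro y hy
      simp only [List.mem_reverse, List.mem_map] at hy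
      obtain ⟨z, hz, rfl⟩ := hy
      rcases hm z hz with h | h
      · exact Or.inr (by simpa using h)
      · exact Or.inl h
    · rw [← hp, List.prod_inv_reverse]

theorem slen_ball_finite {G : Type*} [Group G] (S : Finset G) (r : ℕ) :
    {x : G | SLenLE S r x}.Finite := by
  induction r with
  | zero =>
    refine Set.Finite.subset (Set.finite_singleton 1) ?_
    rintro x ⟨l, hl, -, hp⟩
    interval_cases h : l.length
    · simp at h
      simp [h] at hp
      simp [← hp]
  | succ n ih =>
    have hT : ((S : Set G) ∪ (S : Set G)⁻¹).Finite := S.finite_toSet.union S.finite_toSet.inv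
    refine Set.Finite.subset ((Set.finite_singleton (1 : G)).union (hT.image2 (· * ·) ih)) ?_
    rintro x ⟨l, hl, hmem, hp⟩
    cases l with
    | nil => simp at hp; exact Or.inl (by simp [← hp])
    | cons a t =>
      refine Or.inr ⟨a, ?_, t.prod, ⟨t, by simpa using hl, fun y hy => hmem y (by simp [hy]), rfl⟩, by simpa using hp⟩
      rcases hmem a (by simp) with h | h
      · exact Or.inl h
      · exact Or.inr (by simpa using h)

/-- Only short elements of `H` are close to the coset `gP` when `H` meets `gPg⁻¹`
trivially: the set of `h ∈ H` lying in the `r`-neighbourhood of `gP` in the word metric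
is finite, and hence there is a bound `λ` on the `S`-length of all such `h`. -/
theorem stmt_2 {G : Type*} [Group G] (S : Finset G)
    (hS : Subgroup.closure (S : Set G) = ⊤)
    (P H : Subgroup G) (g : G)
    (hHP : H ⊓ Subgroup.map (MulAut.conj g).toMonoidHom P = ⊥) (r : ℕ) :
    {h : G | h ∈ H ∧ ∃ p ∈ P, SLenLE S r (h⁻¹ * (g * p))}.Finite ∧
    ∃ lam : ℕ, ∀ h ∈ {h : G | h ∈ H ∧ ∃ p ∈ P, SLenLE S r (h⁻¹ * (g * p))},
      SLenLE S lam h := by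
  classical
  set A := {h : G | h ∈ H ∧ ∃ p ∈ P, SLenLE S r (h⁻¹ * (g * p))} with hA
  have key : ∀ h : G, h ∈ A → ∃ p, p ∈ P ∧ h⁻¹ * (g * p) ∈ {x : G | SLenLE S r x} :=
    fun h hh => by obtain ⟨-, p, hp, hx⟩ := hh; exact ⟨p, hp, hx⟩
  let pfun : ∀ h : G, h ∈ A → G := fun h hh => Classical.choose (key h hh)
  let f : G → G := fun h => if hh : h ∈ A then h⁻¹ * (g * pfun h hh) else 1
  have hfspec : ∀ h (hh : h ∈ A), pfun h hh ∈ P ∧ f h = h⁻¹ * (g * pfun h hh) ∧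
      SLenLE S r (h⁻¹ * (g * pfun h hh)) := by
    intro h hh
    exact ⟨(Classical.choose_spec (key h hh)).1, by simp [f, hh], (Classical.choose_spec (key h hh)).2⟩
  have hinj : Set.InjOn f A := by
    intro h1 h1A h2 h2A hf
    obtain ⟨hp1, hf1, -⟩ := hfspec h1 h1A
    obtain ⟨hp2, hf2, -⟩ := hfspec h2 h2A
    rw [hf1, hf2] at hf
    set p1 := pfun h1 h1A
    set p2 := pfun h2 h2A
    have hmemH : h2 * h1⁻¹ ∈ H := H.mul_mem h2A.1 (H.inv_mem h1A.1)
    have heq : h2 * h1⁻¹ = g * (p2 * p1⁻¹) * g⁻¹ := by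
      have h1eq : h1 = g * p1 * (h2⁻¹ * (g * p2))⁻¹ := by rw [← hf]; group
      rw [h1eq]; group
    have hmemP : h2 * h1⁻¹ ∈ Subgroup.map (MulAut.conj g).toMonoidHom P :=
      ⟨p2 * p1⁻¹, P.mul_mem hp2 (P.inv_mem hp1), by simp [MulAut.conj, heq]⟩
    have : h2 * h1⁻¹ ∈ H ⊓ Subgroup.map (MulAut.conj g).toMonoidHom P := ⟨hmemH, hmemP⟩
    rw [hHP, Subgroup.mem_bot] at this
    have : h2 = h1 := by
      have := mul_eq_one_iff_eq_inv.1 this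
      simpa using this
    exact this.symm ▸ rfl
  have hAfin : A.Finite := by
    refine Set.Finite.of_finite_image (Set.Finite.subset (slen_ball_finite S r) ?_) hinj
    rintro x ⟨h, hh, rfl⟩
    obtain ⟨-, hf, hlen⟩ := hfspec h hh
    rw [hf]; exact hlen
  refine ⟨hAfin, ?_⟩
  let N : G → ℕ := fun x => Classical.choose (slen_exists S hS x)
  have hN : ∀ x, SLenLE S (N x) x := fun x => Classical.choose_spec (slen_exists S hS x)
  refine ⟨hAfin.toFinset.sup N, fun h hh => (hN h).mono ?_⟩
  exact Finset.le_sup (hAfin.mem_toFinset.2 hh)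
end

section
/- Let P be a finitely generated abelian group, let K be a subgroup of P, and let F be a finite subset of P disjoint from K. Then there exists a subgroup R of P of finite index such that K ≤ R, R ∩ F = ∅, and K is a direct factor of R, i.e. there exists a subgroup L of P with L ≤ R, K ⊓ L = ⊥, and K ⊔ L = R. -/
/-!
Pass to the quotient `Q = P ⧸ K`. If `m` is a multiple of the order of the (finite) torsion
subgroup of `Q`, then `m • Q` has finite index and meets the torsion trivially, so it is free.
A non-torsion element `q` is detected by a functional `χ : Q → ℤ` (it survives in the free
group `Q ⧸ torsion`), and `χ` takes values in `m ℤ` on `m • Q`; so for `m` large `m • Q` also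
misses the image of `F`. The preimage `R` of `m • Q` is the required subgroup: `R ⧸ K ≅ m • Q`
is free, so the projection `R → m • Q` has a section, whose image is the complement `L`.
-/

open Filter

namespace AddMonoidHom

variable {A Q : Type*} [AddCommGroup A] [AddCommGroup Q]

theorem exists_ker_inf_eq_bot_ker_sup_eq_comap (π : A →+ Q) (hπ : Function.Surjective π)
    (S : AddSubgroup Q) [Module.Projective ℤ S] :
    ∃ L : AddSubgroup A, π.ker ⊓ L = ⊥ ∧ π.ker ⊔ L = S.comap π := by
  obtain ⟨σ, hσ⟩ := Module.projective_lifting_property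
    (π.addSubgroupComap S).toIntLinearMap LinearMap.id
    (π.addSubgroupComap_surjective_of_surjective S hπ)
  set s : S →+ A := (S.comap π).subtype.comp σ.toAddMonoidHom
  have hπs (x : S) : π (s x) = x := congr($(LinearMap.congr_fun hσ x).1)
  refine ⟨s.range, eq_bot_iff.mpr ?_, le_antisymm (sup_le (fun a ha => ?_) ?_) fun a ha => ?_⟩
  · rintro _ ⟨hker, x, rfl⟩
    have hx : x = 0 := Subtype.ext ((hπs x).symm.trans hker)
    simp [hx]
  · simp [mem_ker.mp ha]
  · rintro _ ⟨x, rfl⟩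
    exact (σ x).2
  · have hsa : a - s ⟨π a, ha⟩ ∈ π.ker := by rw [mem_ker, map_sub, hπs, sub_self]
    simpa using AddSubgroup.add_mem_sup hsa (s.mem_range.mpr ⟨⟨π a, ha⟩, rfl⟩)

end AddMonoidHom

namespace AddCommGroup

variable {Q : Type*} [AddCommGroup Q]

theorem card_torsion_nsmul_eq_zero {x : Q} (hx : IsOfFinAddOrder x) :
    Nat.card (torsion Q) • x = 0 :=
  congr($(card_nsmul_eq_zero' (x := (⟨x, hx⟩ : torsion Q))).1)

theorem eq_zero_of_isOfFinAddOrder_of_mem_range_nsmul {m : ℕ} (hm : Nat.card (torsion Q) ∣ m)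
    {y : Q} (hy : IsOfFinAddOrder y) (hym : y ∈ (nsmulAddMonoidHom (α := Q) m).range) :
    y = 0 := by
  obtain ⟨x, rfl⟩ := hym
  obtain rfl | hm0 := eq_or_ne m 0
  · simp
  obtain ⟨k, rfl⟩ := hm
  have hx : IsOfFinAddOrder x := hy.of_nsmul hm0
  rw [nsmulAddMonoidHom_apply, mul_nsmul, card_torsion_nsmul_eq_zero hx, nsmul_zero]

theorem isAddTorsionFree_range_nsmul {m : ℕ} (hm : Nat.card (torsion Q) ∣ m) :
    IsAddTorsionFree (nsmulAddMonoidHom (α := Q) m).range :=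
  .of_not_isOfFinAddOrder fun y hy0 hy => hy0 <| Subtype.ext <|
    eq_zero_of_isOfFinAddOrder_of_mem_range_nsmul hm (AddSubmonoid.isOfFinAddOrder_coe.mpr hy) y.2

variable [AddGroup.FG Q]

instance finite_torsion : Finite (torsion Q) := by
  have : Module.Finite ℤ Q := Module.Finite.iff_addGroup_fg.mpr ‹_›
  have := Module.finite_of_fg_torsion _ (Submodule.torsion_isTorsion (R := ℤ) (M := Q))
  rw [← Submodule.torsion_int]
  exact this

theorem eventually_notMem_range_nsmul {q : Q} (hq : ¬IsOfFinAddOrder q) :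
    ∀ᶠ m in atTop, q ∉ (nsmulAddMonoidHom (α := Q) m).range := by
  have : Module.Finite ℤ Q := Module.Finite.iff_addGroup_fg.mpr ‹_›
  set ρ := (Submodule.torsion ℤ Q).mkQ
  have hρq : ρ q ≠ 0 := by
    rwa [ne_eq, Submodule.mkQ_apply, Submodule.Quotient.mk_eq_zero, ← Submodule.mem_toAddSubgroup,
      Submodule.torsion_int, mem_torsion]
  obtain ⟨χ, hχ⟩ := Module.Projective.exists_dual_ne_zero ℤ hρq
  filter_upwards [eventually_gt_atTop (χ (ρ q)).natAbs]
  rintro m hm ⟨x, hx⟩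
  rw [nsmulAddMonoidHom_apply] at hx
  subst hx
  have hdvd : (m : ℤ) ∣ χ (ρ (m • x)) := ⟨χ (ρ x), by simp⟩
  have := Int.natAbs_le_of_dvd_ne_zero hdvd hχ
  rw [Int.natAbs_natCast] at this
  omega

theorem eventually_notMem_range_card_torsion_mul_nsmul {q : Q} (hq : q ≠ 0) :
    ∀ᶠ k in atTop, q ∉ (nsmulAddMonoidHom (α := Q) (Nat.card (torsion Q) * k)).range := by
  by_cases hfin : IsOfFinAddOrder q
  · exact .of_forall fun k hk => hq <|
      eq_zero_of_isOfFinAddOrder_of_mem_range_nsmul (dvd_mul_right _ k) hfin hk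
  · have hcard : 0 < Nat.card (torsion Q) := Nat.card_pos
    exact (tendsto_id.const_mul_atTop' hcard).eventually (eventually_notMem_range_nsmul hfin)

theorem exists_finiteIndex_free_forall_notMem (F : Finset Q) (hF : 0 ∉ F) :
    ∃ S : AddSubgroup Q, S.FiniteIndex ∧ Module.Free ℤ S ∧ ∀ q ∈ F, q ∉ S := by
  obtain ⟨k, hk0, hkF⟩ := ((eventually_ne_atTop 0).and <| (eventually_all_finset F).mpr
    fun q hq => eventually_notMem_range_card_torsion_mul_nsmul (ne_of_mem_of_not_mem hq hF)).exists
  set S := (nsmulAddMonoidHom (α := Q) (Nat.card (torsion Q) * k)).range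
  have : S.FiniteIndex :=
    AddSubgroup.finiteIndex_range_nsmulAddMonoidHom_of_fg Q (mul_ne_zero Nat.card_pos.ne' hk0)
  have : IsAddTorsionFree S := isAddTorsionFree_range_nsmul (dvd_mul_right _ k)
  have : Module.Finite ℤ S := Module.Finite.iff_addGroup_fg.mpr inferInstance
  exact ⟨S, inferInstance, inferInstance, hkF⟩

end AddCommGroup

theorem AddSubgroup.exists_finiteIndex_directFactor_avoiding {A : Type*} [AddCommGroup A]
    [AddGroup.FG A] (K : AddSubgroup A) (F : Finset A) (hF : ∀ f ∈ F, f ∉ K) :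
    ∃ R : AddSubgroup A, R.FiniteIndex ∧ K ≤ R ∧ (∀ f ∈ F, f ∉ R) ∧
      ∃ L : AddSubgroup A, L ≤ R ∧ K ⊓ L = ⊥ ∧ K ⊔ L = R := by
  classical
  set π := QuotientAddGroup.mk' K
  have hπ : Function.Surjective π := QuotientAddGroup.mk'_surjective K
  have hF' : (0 : A ⧸ K) ∉ F.image π := by
    simpa [π, QuotientAddGroup.eq_zero_iff] using hF
  obtain ⟨S, hSfin, hSfree, hSF⟩ := AddCommGroup.exists_finiteIndex_free_forall_notMem _ hF'
  obtain ⟨L, hKL, hKLR⟩ := π.exists_ker_inf_eq_bot_ker_sup_eq_comap hπ S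
  rw [QuotientAddGroup.ker_mk'] at hKL hKLR
  refine ⟨S.comap π, ⟨?_⟩, hKLR ▸ le_sup_left, fun f hf => hSF _ (Finset.mem_image_of_mem π hf),
    L, hKLR ▸ le_sup_right, hKL, hKLR⟩
  rw [AddSubgroup.index_comap_of_surjective _ hπ]
  exact hSfin.index_ne_zero

/-- In a finitely generated abelian group `P`, given a subgroup `K` and a finite set `F`
disjoint from `K`, there is a finite-index subgroup `R` of `P` containing `K`, avoiding `F`,
and in which `K` is a direct factor. -/
theorem stmt_3 {P : Type*} [CommGroup P] [Group.FG P] (K : Subgroup P) (F : Finset P)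
    (hF : ∀ f ∈ F, f ∉ K) :
    ∃ R : Subgroup P, R.FiniteIndex ∧ K ≤ R ∧ (∀ f ∈ F, f ∉ R) ∧
      ∃ L : Subgroup P, L ≤ R ∧ K ⊓ L = ⊥ ∧ K ⊔ L = R := by
  classical
  obtain ⟨R, hRfin, hKR, hFR, L, hLR, hKL, hKLR⟩ :=
    K.toAddSubgroup.exists_finiteIndex_directFactor_avoiding (F.image Additive.ofMul)
      (by simpa using hF)
  obtain ⟨R, rfl⟩ := Subgroup.toAddSubgroup.surjective R
  obtain ⟨L, rfl⟩ := Subgroup.toAddSubgroup.surjective L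
  refine ⟨R, Subgroup.finiteIndex_toAddSubgroup_iff.mp hRfin, by simpa using hKR,
    fun f hf => by simpa using hFR _ (Finset.mem_image_of_mem _ hf), L, by simpa using hLR, ?_, ?_⟩
  · apply Subgroup.toAddSubgroup.injective
    rwa [OrderIso.map_inf, OrderIso.map_bot]
  · apply Subgroup.toAddSubgroup.injective
    rwa [OrderIso.map_sup]
end

section
/- Let N be a finitely generated nilpotent group that is not virtually abelian, i.e. N has no abelian subgroup of finite index. Then there exists an element g ∈ N such that the cyclic subgroup ⟨g⟩ (Subgroup.zpowers g) is not a virtual retract of N. -/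
/-!
If `c = ⁅a, b⁆` is central and `⟨c⟩` is a virtual retract via `r : K →* ⟨c⟩`, pick `n, m > 0`
with `a ^ n, b ^ m ∈ K`. Then `⁅a ^ n, b ^ m⁆ = c ^ (n * m)` is fixed by `r`, but is also a
commutator, so it is killed by `r` because `⟨c⟩` is abelian; hence `c` has finite order.

So it suffices to show that a finitely generated nilpotent group in which every central
commutator has finite order is virtually abelian. By induction along `G ⧸ center G`, some
finite-index `A ≤ G` has all its commutators central. For `u ∈ A` the map `x ↦ ⁅u, x⁆` is then
a homomorphism onto a finitely generated abelian torsion group, which is finite; so a power of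
`u` is central in `A`. Hence `A ⧸ center A` is a finitely generated abelian torsion group, and
`center A` is the abelian subgroup of finite index.
-/

/-- A subgroup `H` of `G` is a virtual retract of `G` if there is a finite-index subgroup
`K` of `G` containing `H` and a homomorphism `r : K →* H` restricting to the identity on `H`. -/
def IsVirtualRetract {G : Type*} [Group G] (H : Subgroup G) : Prop :=
  ∃ (K : Subgroup G) (hle : H ≤ K), K.FiniteIndex ∧
    ∃ r : K →* H, ∀ (x : G) (hx : x ∈ H), r ⟨x, hle hx⟩ = ⟨x, hx⟩

open Subgroup
open scoped commutatorElement IsMulCommutative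

section Commutator

variable {G : Type*} [Group G]

theorem commutatorElement_pow_left {a b : G} (h : Commute ⁅a, b⁆ a) (n : ℕ) :
    ⁅a ^ n, b⁆ = ⁅a, b⁆ ^ n := by
  have hconj : b * a⁻¹ * b⁻¹ = a⁻¹ * ⁅a, b⁆ := by rw [commutatorElement_def]; group
  calc ⁅a ^ n, b⁆ = a ^ n * (b * a⁻¹ * b⁻¹) ^ n := by
        rw [conj_pow, commutatorElement_def]; group
    _ = ⁅a, b⁆ ^ n := by rw [hconj, h.symm.inv_left.mul_pow, inv_pow, mul_inv_cancel_left]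

theorem commutatorElement_pow_right {a b : G} (h : Commute ⁅a, b⁆ b) (n : ℕ) :
    ⁅a, b ^ n⁆ = ⁅a, b⁆ ^ n := by
  have hconj : a * b * a⁻¹ = ⁅a, b⁆ * b := by rw [commutatorElement_def]; group
  calc ⁅a, b ^ n⁆ = (a * b * a⁻¹) ^ n * (b ^ n)⁻¹ := by
        rw [conj_pow, commutatorElement_def]
    _ = ⁅a, b⁆ ^ n := by rw [hconj, h.mul_pow, mul_inv_cancel_right]

theorem commutatorElement_pow_pow {a b : G} (ha : Commute ⁅a, b⁆ a) (hb : Commute ⁅a, b⁆ b)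
    (n m : ℕ) : ⁅a ^ n, b ^ m⁆ = ⁅a, b⁆ ^ (n * m) := by
  have hb' : Commute ⁅a ^ n, b⁆ b := by rw [commutatorElement_pow_left ha]; exact hb.pow_left n
  rw [commutatorElement_pow_right hb', commutatorElement_pow_left ha, pow_mul]

theorem QuotientGroup.mk_commutatorElement {N : Subgroup G} [N.Normal] (a b : G) :
    ((⁅a, b⁆ : G) : G ⧸ N) = ⁅(a : G ⧸ N), (b : G ⧸ N)⁆ :=
  map_commutatorElement (QuotientGroup.mk' N) a b

theorem isOfFinOrder_of_isVirtualRetract_zpowers_commutatorElement {a b : G}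
    (hc : ⁅a, b⁆ ∈ center G) (hr : IsVirtualRetract (zpowers ⁅a, b⁆)) : IsOfFinOrder ⁅a, b⁆ := by
  obtain ⟨K, hle, hK, r, hr⟩ := hr
  obtain ⟨n, hn, -, han⟩ := K.exists_pow_mem_of_index_ne_zero hK.index_ne_zero a
  obtain ⟨m, hm, -, hbm⟩ := K.exists_pow_mem_of_index_ne_zero hK.index_ne_zero b
  have hmem : ⁅a, b⁆ ^ (n * m) ∈ zpowers ⁅a, b⁆ := pow_mem (mem_zpowers _) _
  have hK : (⟨⁅a, b⁆ ^ (n * m), hle hmem⟩ : K) = ⁅(⟨a ^ n, han⟩ : K), ⟨b ^ m, hbm⟩⁆ :=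
    Subtype.ext (commutatorElement_pow_pow (hc.comm a) (hc.comm b) n m).symm
  have hone : (⟨⁅a, b⁆ ^ (n * m), hmem⟩ : zpowers ⁅a, b⁆) = 1 := by
    rw [← hr _ hmem, hK, map_commutatorElement, commutatorElement_eq_one_iff_mul_comm]
    exact mul_comm _ _
  exact isOfFinOrder_iff_pow_eq_one.mpr ⟨n * m, Nat.mul_pos hn hm, congrArg Subtype.val hone⟩

def centralCommutatorHom (u : G) (hu : ∀ x, ⁅u, x⁆ ∈ center G) : G →* G where
  toFun x := ⁅u, x⁆
  map_one' := commutatorElement_one_right u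
  map_mul' x y := by
    have hxy : ⁅u, x * y⁆ = ⁅u, x⁆ * (x * ⁅u, y⁆ * x⁻¹) := by
      simp only [commutatorElement_def]; group
    rw [hxy, ← ((hu y).comm x).eq, mul_inv_cancel_right]

end Commutator

def HasTorsionCentralCommutators (G : Type*) [Group G] : Prop :=
  ∀ a b : G, ⁅a, b⁆ ∈ center G → IsOfFinOrder ⁅a, b⁆

namespace HasTorsionCentralCommutators

variable {G : Type*} [Group G] [Group.FG G]

theorem isOfFinOrder_mk_center (hG : HasTorsionCentralCommutators G) {u : G}
    (hu : ∀ x, ⁅u, x⁆ ∈ center G) :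
    IsOfFinOrder (u : G ⧸ center G) := by
  let φ := centralCommutatorHom u hu
  have : IsMulCommutative φ.range := isMulCommutative_iff.mpr fun
    | ⟨_, x, hx⟩, ⟨_, y, hy⟩ => Subtype.ext <| by
      subst hx hy; exact ((hu x).comm _).eq
  have : Finite φ.range := CommGroup.finite_of_fg_isMulTorsion _ fun
    | ⟨_, x, hx⟩ => by subst hx; exact Submonoid.isOfFinOrder_coe.mp (hG u x (hu x))
  refine isOfFinOrder_iff_pow_eq_one.mpr ⟨Nat.card φ.range, Nat.card_pos, ?_⟩
  rw [← QuotientGroup.mk_pow, QuotientGroup.eq_one_iff, mem_center_iff]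
  intro x
  have hx : ⁅u, x⁆ ^ Nat.card φ.range = 1 :=
    congrArg Subtype.val (pow_card_eq_one' (x := (⟨⁅u, x⁆, x, rfl⟩ : φ.range)))
  rw [← commutatorElement_pow_left ((hu x).comm u),
    commutatorElement_eq_one_iff_mul_comm] at hx
  exact hx.symm

theorem quotient_center (hG : HasTorsionCentralCommutators G) :
    HasTorsionCentralCommutators (G ⧸ center G) := by
  intro x y hxy
  induction x using QuotientGroup.induction_on with | H a => ?_
  induction y using QuotientGroup.induction_on with | H b => ?_
  rw [← QuotientGroup.mk_commutatorElement] at hxy ⊢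
  refine hG.isOfFinOrder_mk_center fun x => (QuotientGroup.eq_one_iff _).mp ?_
  rw [QuotientGroup.mk_commutatorElement, commutatorElement_eq_one_iff_commute]
  exact hxy.comm _

theorem finiteIndex_center (hG : HasTorsionCentralCommutators G)
    (h : ∀ a b : G, ⁅a, b⁆ ∈ center G) : (center G).FiniteIndex := by
  have : IsMulCommutative (G ⧸ center G) := isMulCommutative_iff.mpr fun x y => by
    induction x using QuotientGroup.induction_on with | H a => ?_
    induction y using QuotientGroup.induction_on with | H b => ?_
    rw [← commutatorElement_eq_one_iff_mul_comm, ← QuotientGroup.mk_commutatorElement,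
      QuotientGroup.eq_one_iff]
    exact h a b
  have : Finite (G ⧸ center G) := CommGroup.finite_of_fg_isMulTorsion _ fun x => by
    induction x using QuotientGroup.induction_on with | H u => ?_
    exact hG.isOfFinOrder_mk_center (h u)
  exact finiteIndex_of_finite_quotient

theorem exists_finiteIndex_isMulCommutative_of_quotient_center
    (hG : HasTorsionCentralCommutators G)
    (hQ : ∃ B : Subgroup (G ⧸ center G), B.FiniteIndex ∧ IsMulCommutative B) :
    ∃ A : Subgroup G, A.FiniteIndex ∧ IsMulCommutative A := by
  obtain ⟨B, hB, hBcomm⟩ := hQ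
  let A := B.comap (QuotientGroup.mk' (center G))
  have hA : A.FiniteIndex := ⟨by
    rw [index_comap_of_surjective _ (QuotientGroup.mk'_surjective _)]; exact hB.index_ne_zero⟩
  have : Group.FG A := fg_of_index_ne_zero A
  have hAcomm : ∀ a b : A, ⁅(a : G), (b : G)⁆ ∈ center G := fun a b => by
    rw [← QuotientGroup.eq_one_iff, QuotientGroup.mk_commutatorElement,
      commutatorElement_eq_one_iff_mul_comm]
    exact congrArg Subtype.val (mul_comm' (⟨_, a.2⟩ : B) ⟨_, b.2⟩)
  have hAcenter : ∀ a b : A, ⁅a, b⁆ ∈ center A := fun a b =>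
    mem_center_iff.mpr fun g => Subtype.ext (mem_center_iff.mp (hAcomm a b) g)
  have hAtors : HasTorsionCentralCommutators A := fun a b _ =>
    Submonoid.isOfFinOrder_coe.mp (hG _ _ (hAcomm a b))
  have hZ := hAtors.finiteIndex_center hAcenter
  exact ⟨(center A).map A.subtype,
    ⟨by rw [index_map_subtype]; exact mul_ne_zero hZ.index_ne_zero hA.index_ne_zero⟩,
    inferInstance⟩

theorem exists_finiteIndex_isMulCommutative [Group.IsNilpotent G]
    (hG : HasTorsionCentralCommutators G) :
    ∃ A : Subgroup G, A.FiniteIndex ∧ IsMulCommutative A := by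
  revert hG
  exact Group.nilpotent_center_quotient_ind (P := fun G _ _ => ∀ [Group.FG G],
    HasTorsionCentralCommutators G → ∃ A : Subgroup G, A.FiniteIndex ∧ IsMulCommutative A) G
    (fun G _ _ _ _ => ⟨⊥, inferInstance, inferInstance⟩) fun G _ _ ih _ hG =>
      hG.exists_finiteIndex_isMulCommutative_of_quotient_center (ih hG.quotient_center)

end HasTorsionCentralCommutators

/-- A finitely generated nilpotent group that is not virtually abelian contains a cyclic
subgroup that is not a virtual retract. -/
theorem stmt_6 {N : Type*} [Group N] [Group.FG N] [Group.IsNilpotent N]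
    (h : ¬∃ A : Subgroup N, A.FiniteIndex ∧ ∀ a b : A, a * b = b * a) :
    ∃ g : N, ¬IsVirtualRetract (Subgroup.zpowers g) := by
  by_contra! hretract
  have hG : HasTorsionCentralCommutators N := fun a b hc =>
    isOfFinOrder_of_isVirtualRetract_zpowers_commutatorElement hc (hretract _)
  obtain ⟨A, hA, hAcomm⟩ := hG.exists_finiteIndex_isMulCommutative
  exact h ⟨A, hA, isMulCommutative_iff.mp hAcomm⟩
end

section
/- The complex numbers (1+√3)·i and (2+√3)·i are not equivalent under the action of PGL₂(ℚ) by Möbius transformations: there do not exist rational numbers a, b, c, d with a·d − b·c ≠ 0 such that, in ℂ, ((2+√3)·i) · ((c : ℂ)·((1+√3)·i) + d) = (a : ℂ)·((1+√3)·i) + b. (Equivalently, (2+√3)i ≠ (a·(1+√3)i + b)/(c·(1+√3)i + d) for all such a, b, c, d.) -/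
open Complex

lemma aux_lin (p q : ℚ) (h : (p:ℝ) + q * Real.sqrt 3 = 0) : p = 0 ∧ q = 0 := by
  have hirr : Irrational (Real.sqrt 3) := by
    have h3 : Nat.Prime 3 := by norm_num
    exact_mod_cast h3.irrational_sqrt
  have hq : q = 0 := by
    by_contra hq
    exact hirr ⟨-p / q, by push_cast; field_simp; linarith⟩
  refine ⟨?_, hq⟩
  rw [hq] at h; simp at h; exact_mod_cast h

/-- The complex numbers `(1+√3)i` and `(2+√3)i` are not `PGL₂(ℚ)`-equivalent under Möbius
transformations (stated in cross-multiplied form to avoid division). -/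
theorem stmt_7 :
    ¬∃ a b c d : ℚ, a * d - b * c ≠ 0 ∧
      ((2 + (Real.sqrt 3 : ℂ)) * Complex.I) *
          ((c : ℂ) * ((1 + (Real.sqrt 3 : ℂ)) * Complex.I) + (d : ℂ)) =
        (a : ℂ) * ((1 + (Real.sqrt 3 : ℂ)) * Complex.I) + (b : ℂ) := by
  rintro ⟨a, b, c, d, hdet, h⟩
  have hre := congrArg Complex.re h
  have him := congrArg Complex.im h
  simp [Complex.add_re, Complex.add_im, Complex.mul_re, Complex.mul_im] at hre him
  ring_nf at hre him
  rw [Real.sq_sqrt (by norm_num : (0:ℝ) ≤ 3)] at hre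
  have h1 := aux_lin (-5 * c - b) (-3 * c) (by push_cast; linarith)
  have h2 := aux_lin (2 * d - a) (d - a) (by push_cast; nlinarith [him])
  have hc : c = 0 := by linarith [h1.2]
  have hb : b = 0 := by linarith [h1.1]
  have ha : a = 0 := by linarith [h2.1, h2.2]
  have hd : d = 0 := by linarith [h2.1, h2.2]
  rw [ha, hb, hc, hd] at hdet; norm_num at hdet
end

section
/- Let a, s₁, s₂ be real numbers, and consider the three bijections of ℂ given by c(z) = z + a, d₁(z) = conj(z) + s₁·i, and d₂(z) = conj(z) + s₂·i (a horizontal translation and reflections in two horizontal lines). Let Γ be the subgroup of the group of bijections of ℂ (Equiv.Perm ℂ) generated by c, d₁, d₂. Then: (1) every γ ∈ Γ with γ ∘ γ = id preserves real parts, i.e. Re(γ(z)) = Re(z) for all z ∈ ℂ; and (2) the subgroup Δ of Γ generated by the set of all such involutions does not act cocompactly on ℂ: there is no compact subset B of ℂ such that the images δ(B), for δ ∈ Δ, cover ℂ. (This is the key step showing that no reflection subgroup of the cusp stabilizer ⟨c, d₂, d₃⟩ acts with finite coarea, so that the commensurator of the Löbell orbifold group Γ(n) is not commensurable with a reflection group.)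 -/
/-- Complex conjugation as a permutation of `ℂ`. -/
noncomputable def conjPerm : Equiv.Perm ℂ :=
  Function.Involutive.toPerm (⇑(starRingEnd ℂ)) (fun z => Complex.conj_conj z)

/-- Translation `z ↦ z + w` as a permutation of `ℂ`. -/
noncomputable def translatePerm (w : ℂ) : Equiv.Perm ℂ := Equiv.addRight w

/-- Reflection in a horizontal line: `z ↦ conj z + s·i`, as a permutation of `ℂ`. -/
noncomputable def reflLine (s : ℝ) : Equiv.Perm ℂ :=
  conjPerm.trans (translatePerm ((s : ℂ) * Complex.I))

/-!
Every generator shifts real parts by a constant, hence so does every element of `Γ`. An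
involution shifting real parts by `t` satisfies `2t = 0`, so it preserves real parts, and so
does every element of `Δ`. Each `Δ`-orbit therefore stays inside a vertical line, and the
translates of a compact `B` miss every point whose real part exceeds `sup Re(B)`.
-/

open Complex

noncomputable def reShiftSubgroup : Subgroup (Equiv.Perm ℂ) where
  carrier := {γ | ∀ z, (γ z).re = z.re + (γ 0).re}
  one_mem' _ := by simp
  mul_mem' {γ δ} hγ hδ z := by
    simp only [Equiv.Perm.mul_apply, hγ (δ z), hδ z, hγ (δ 0)]
    ring
  inv_mem' {γ} hγ z := by
    have hz := hγ (γ⁻¹ z)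
    have h0 := hγ (γ⁻¹ 0)
    simp only [Equiv.Perm.coe_inv, Equiv.apply_symm_apply, zero_re] at hz h0 ⊢
    linarith

noncomputable def reFixSubgroup : Subgroup (Equiv.Perm ℂ) where
  carrier := {γ | ∀ z, (γ z).re = z.re}
  one_mem' _ := rfl
  mul_mem' {γ δ} hγ hδ z := by
    rw [Equiv.Perm.mul_apply, hγ (δ z), hδ z]
  inv_mem' {γ} hγ z := by
    simpa using (hγ (γ⁻¹ z)).symm

lemma translatePerm_mem_reShiftSubgroup (w : ℂ) : translatePerm w ∈ reShiftSubgroup := by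
  intro z
  simp [translatePerm]

lemma reflLine_mem_reShiftSubgroup (s : ℝ) : reflLine s ∈ reShiftSubgroup := by
  intro z
  change (starRingEnd ℂ z + s * I).re = z.re + (starRingEnd ℂ 0 + s * I).re
  simp

lemma mem_reFixSubgroup_of_mul_self_eq_one {γ : Equiv.Perm ℂ} (hγ : γ ∈ reShiftSubgroup)
    (hinv : γ * γ = 1) : γ ∈ reFixSubgroup := by
  have hγγ : (γ (γ 0)).re = 0 := by
    rw [← Equiv.Perm.mul_apply, hinv, Equiv.Perm.one_apply, zero_re]
  have h0 : (γ 0).re = 0 := by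
    linarith [hγ (γ 0)]
  intro z
  rw [hγ z, h0, add_zero]

lemma iUnion_image_subset_re_preimage {Δ : Subgroup (Equiv.Perm ℂ)} (hΔ : Δ ≤ reFixSubgroup)
    (B : Set ℂ) : ⋃ δ ∈ Δ, ⇑δ '' B ⊆ re ⁻¹' (re '' B) := by
  simp only [Set.iUnion_subset_iff, Set.image_subset_iff]
  intro δ hδ b hb
  exact ⟨b, hb, (hΔ hδ b).symm⟩

lemma re_preimage_image_ne_univ {B : Set ℂ} (hB : IsCompact B) :
    re ⁻¹' (re '' B) ≠ Set.univ := by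
  obtain ⟨M, hM⟩ := (hB.image continuous_re).bddAbove
  intro hcov
  have hM1 : ((M + 1 : ℝ) : ℂ) ∈ re ⁻¹' (re '' B) := hcov ▸ Set.mem_univ _
  have := hM (by simpa using hM1)
  linarith

/-- In the group `Γ` generated by the horizontal translation `c(z) = z + a` and the
reflections `d₁(z) = conj z + s₁·i`, `d₂(z) = conj z + s₂·i`: (1) every involution of `Γ`
preserves real parts, and (2) the subgroup `Δ` generated by the involutions of `Γ` does
not act cocompactly on `ℂ`. -/
theorem stmt_9 (a s₁ s₂ : ℝ) :
    (∀ γ ∈ Subgroup.closure {translatePerm (a : ℂ), reflLine s₁, reflLine s₂},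
      γ * γ = 1 → ∀ z : ℂ, (γ z).re = z.re) ∧
    ¬∃ B : Set ℂ, IsCompact B ∧
      (⋃ δ ∈ Subgroup.closure {γ : Equiv.Perm ℂ |
          γ ∈ Subgroup.closure {translatePerm (a : ℂ), reflLine s₁, reflLine s₂} ∧
          γ * γ = 1},
        ⇑δ '' B) = Set.univ := by
  have hΓ : Subgroup.closure {translatePerm (a : ℂ), reflLine s₁, reflLine s₂} ≤
      reShiftSubgroup := by
    rw [Subgroup.closure_le]
    rintro γ (rfl | rfl | rfl)
    · exact translatePerm_mem_reShiftSubgroup _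
    · exact reflLine_mem_reShiftSubgroup _
    · exact reflLine_mem_reShiftSubgroup _
  have hinv : ∀ γ ∈ Subgroup.closure {translatePerm (a : ℂ), reflLine s₁, reflLine s₂},
      γ * γ = 1 → γ ∈ reFixSubgroup :=
    fun γ hγ h => mem_reFixSubgroup_of_mul_self_eq_one (hΓ hγ) h
  refine ⟨hinv, ?_⟩
  rintro ⟨B, hB, hcov⟩
  refine re_preimage_image_ne_univ hB (Set.univ_subset_iff.mp ?_)
  rw [← hcov]
  refine iUnion_image_subset_re_preimage ?_ B
  rw [Subgroup.closure_le]
  exact fun γ ⟨hγ, h⟩ => hinv γ hγ h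
end
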